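/- arXiv:1912.06389 — 3 statements merged into one kernel-verified Lean document; each statement's English description precedes it below -/
import Mathlib

section
/- Assume (A1), (A2) and (A3). Then for any speed c ∈ ℝ, the constant function p ≡ 𝟙 is the unique bounded C² solution p : ℝ → ℝ^N of the traveling wave system −d_i p_i'' − c p_i' = (M p)_i + p_i − p_i (C p)_i (i = 1,…,N) satisfying min_{i∈{1,…,N}} inf_{ℝ} p_i > 0. -/
open Matrix Filter

/-- Irreducibility of a matrix: there is no nonempty proper subset `S` of indices with
`M i j = 0` for all `i ∈ S`, `j ∉ S`. -/
def MatrixIrreducible {N : ℕ} (M : Matrix (Fin N) (Fin N) ℝ) : Prop :=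
  ∀ S : Finset (Fin N), S.Nonempty → S ≠ Finset.univ → ∃ i ∈ S, ∃ j ∉ S, M i j ≠ 0

/-! Along the wave, `G = ∑ i, (-dᵢ (1 - 1/pᵢ) pᵢ' - c (pᵢ - log pᵢ))` is a Lyapunov function:
multiplying the i-th equation by `1 - 1/pᵢ` gives `G' = -Φ` with
`Φ = ∑ i, dᵢ (pᵢ'/pᵢ)² + ∑ i j, Mᵢⱼ (pⱼ/pᵢ - 1 - log (pⱼ/pᵢ)) + (p - 𝟙) ⬝ C (p - 𝟙)`.
The middle sum comes from the zero row and column sums of `M` and is nonnegative because `M` is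
off-diagonally nonnegative; the last term is nonnegative because `C` is normal with spectrum in
the closed right half-plane, so `C + Cᵀ` is positive semidefinite. By irreducibility and
`C 𝟙 = 𝟙`, `Φ` vanishes only at the rest state `(p, p') = (𝟙, 0)`.

The equation bounds `p'`, so `(p, p')` stays in a compact set on which `p` is bounded away from
`0`. Hence `G` is bounded and antitone, `Φ` becomes arbitrarily small near `±∞`, and compactness
forces both limits of `G` to equal its value at the rest state. So `G` is constant, `Φ ≡ 0` and
`p ≡ 𝟙`. -/

open scoped Topology

section MatrixFacts

open scoped Matrix.Norms.L2Operator MatrixOrder ComplexOrder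

theorem Matrix.posSemidef_add_conjTranspose_of_isStarNormal {n : Type*} [Fintype n]
    [DecidableEq n] {A : Matrix n n ℂ} [IsStarNormal A]
    (hA : ∀ μ ∈ spectrum ℂ A, 0 ≤ μ.re) : (A + Aᴴ).PosSemidef := by
  rw [← Matrix.nonneg_iff_posSemidef]
  have hcfc : A + Aᴴ = cfc (fun z : ℂ => z + star z) A := by
    rw [cfc_add .., cfc_star, cfc_id' ℂ A]
    rfl
  rw [hcfc]
  refine cfc_nonneg fun z hz => ?_
  rw [Complex.nonneg_iff]
  simp [hA z hz]

theorem Matrix.dotProduct_mulVec_nonneg_of_normal {n : Type*} [Fintype n] [DecidableEq n]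
    {C : Matrix n n ℝ} (hC : C * Cᵀ = Cᵀ * C)
    (hspec : ∀ μ ∈ spectrum ℂ (C.map (algebraMap ℝ ℂ)), 0 ≤ μ.re) (x : n → ℝ) :
    0 ≤ x ⬝ᵥ C *ᵥ x := by
  set f := algebraMap ℝ ℂ
  have hCH : (C.map f)ᴴ = Cᵀ.map f := by
    ext i j
    simp [f]
  have : IsStarNormal (C.map f) := ⟨by
    change (C.map f)ᴴ * C.map f = C.map f * (C.map f)ᴴ
    rw [hCH, ← Matrix.map_mul, ← Matrix.map_mul, hC]⟩
  have hpsd :=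
    (posSemidef_add_conjTranspose_of_isStarNormal hspec).dotProduct_mulVec_nonneg (f ∘ x)
  have hsum : C.map f + (C.map f)ᴴ = (C + Cᵀ).map f := by
    rw [hCH]
    ext i j
    simp
  have hstar : star (f ∘ x) = f ∘ x := by
    ext i
    simp [f]
  have hmul : (C + Cᵀ).map f *ᵥ (f ∘ x) = f ∘ ((C + Cᵀ) *ᵥ x) :=
    funext fun i => (RingHom.map_mulVec f _ x i).symm
  rw [hsum, hstar, hmul, ← RingHom.map_dotProduct, Complex.coe_algebraMap,
    Complex.zero_le_real, add_mulVec, dotProduct_add, dotProduct_transpose_mulVec] at hpsd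
  linarith

end MatrixFacts

theorem MatrixIrreducible.apply_eq {N : ℕ} {M : Matrix (Fin N) (Fin N) ℝ}
    (hM : MatrixIrreducible M) {α : Type*} {f : Fin N → α}
    (hf : ∀ i j, i ≠ j → M i j ≠ 0 → f i = f j) (i j : Fin N) : f i = f j := by
  classical
  by_contra hij
  obtain ⟨k, hk, l, hl, hkl⟩ := hM {k | f i = f k} ⟨i, by simp⟩ fun h => hij <| by
    simpa using Finset.eq_univ_iff_forall.mp h j
  simp only [Finset.mem_filter, Finset.mem_univ, true_and] at hk hl
  exact hl (hk.trans (hf k l (fun h => hl (h ▸ hk)) hkl))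

section ReactionDissipation

variable {N : ℕ} (M C : Matrix (Fin N) (Fin N) ℝ) (x : Fin N → ℝ)

noncomputable def entropyProduction : ℝ :=
  ∑ i, ∑ j, M i j * (x j / x i - 1 - Real.log (x j / x i))

noncomputable def reactionDissipation : ℝ :=
  entropyProduction M x + (x - 1) ⬝ᵥ C *ᵥ (x - 1)

variable {M C x}

theorem sum_one_sub_inv_mul_mulVec (hrow : ∀ i, ∑ j, M i j = 0) (hcol : ∀ j, ∑ i, M i j = 0)
    (hx : ∀ i, x i ≠ 0) :
    ∑ i, (1 - (x i)⁻¹) * (M *ᵥ x) i = -entropyProduction M x := by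
  have hcol' (g : Fin N → ℝ) : ∑ i, ∑ j, M i j * g j = 0 := by
    rw [Finset.sum_comm]
    simp [← Finset.sum_mul, hcol]
  have hrow' (g : Fin N → ℝ) : ∑ i, ∑ j, M i j * g i = 0 := by
    simp [← Finset.sum_mul, hrow]
  have hentropy : entropyProduction M x = ∑ i, ∑ j, M i j * (x j / x i) := by
    have hterm (i j : Fin N) : M i j * (x j / x i - 1 - Real.log (x j / x i))
        = M i j * (x j / x i) - M i j * (1 + Real.log (x j)) + M i j * Real.log (x i) := by
      rw [Real.log_div (hx j) (hx i)]
      ring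
    simp only [entropyProduction, hterm, Finset.sum_add_distrib, Finset.sum_sub_distrib,
      hcol', hrow', sub_zero, add_zero]
  have hpair (i : Fin N) : (1 - (x i)⁻¹) * (M *ᵥ x) i
      = ∑ j, M i j * x j - ∑ j, M i j * (x j / x i) := by
    simp only [mulVec, dotProduct, sub_mul, one_mul, Finset.mul_sum, ← Finset.sum_sub_distrib]
    exact Finset.sum_congr rfl fun j _ => by ring
  simp only [hpair, Finset.sum_sub_distrib, hcol', hentropy, zero_sub]

theorem sum_one_sub_inv_mul_logistic (hrow : ∀ i, ∑ j, C i j = 1) (hx : ∀ i, x i ≠ 0) :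
    ∑ i, (1 - (x i)⁻¹) * (x i - x i * (C *ᵥ x) i) = -((x - 1) ⬝ᵥ C *ᵥ (x - 1)) := by
  have hC1 : C *ᵥ (x - 1) = C *ᵥ x - 1 := by
    ext i
    simp [mulVec, dotProduct, mul_sub, hrow]
  rw [hC1, dotProduct, ← Finset.sum_neg_distrib]
  refine Finset.sum_congr rfl fun i _ => ?_
  simp only [Pi.sub_apply, Pi.one_apply]
  field_simp [hx i]
  ring

theorem sum_one_sub_inv_mul_reaction (hMrow : ∀ i, ∑ j, M i j = 0)
    (hMcol : ∀ j, ∑ i, M i j = 0) (hCrow : ∀ i, ∑ j, C i j = 1) (hx : ∀ i, x i ≠ 0) :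
    ∑ i, (1 - (x i)⁻¹) * ((M *ᵥ x) i + x i - x i * (C *ᵥ x) i)
      = -reactionDissipation M C x := by
  simp only [add_sub_assoc, mul_add, Finset.sum_add_distrib,
    sum_one_sub_inv_mul_mulVec hMrow hMcol hx, sum_one_sub_inv_mul_logistic hCrow hx,
    reactionDissipation, neg_add]

theorem entropyProduction_term_nonneg (hM : ∀ i j, i ≠ j → 0 ≤ M i j) (hx : ∀ i, 0 < x i)
    (i j : Fin N) : 0 ≤ M i j * (x j / x i - 1 - Real.log (x j / x i)) := by
  rcases eq_or_ne i j with rfl | hij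
  · simp [div_self (hx i).ne']
  · exact mul_nonneg (hM i j hij)
      (by linarith [Real.log_le_sub_one_of_pos (div_pos (hx j) (hx i))])

theorem entropyProduction_nonneg (hM : ∀ i j, i ≠ j → 0 ≤ M i j) (hx : ∀ i, 0 < x i) :
    0 ≤ entropyProduction M x :=
  Finset.sum_nonneg fun i _ => Finset.sum_nonneg fun j _ =>
    entropyProduction_term_nonneg hM hx i j

theorem MatrixIrreducible.apply_eq_of_entropyProduction_eq_zero (hirr : MatrixIrreducible M)
    (hM : ∀ i j, i ≠ j → 0 ≤ M i j) (hx : ∀ i, 0 < x i) (h : entropyProduction M x = 0)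
    (i j : Fin N) : x i = x j := by
  refine hirr.apply_eq (fun i j hij hMij => ?_) i j
  have hterm := (Finset.sum_eq_zero_iff_of_nonneg fun j _ =>
    entropyProduction_term_nonneg hM hx i j).mp
    ((Finset.sum_eq_zero_iff_of_nonneg fun i _ => Finset.sum_nonneg fun j _ =>
      entropyProduction_term_nonneg hM hx i j).mp h i (Finset.mem_univ i)) j (Finset.mem_univ j)
  have hfactor : x j / x i - 1 - Real.log (x j / x i) = 0 :=
    (mul_eq_zero.mp hterm).resolve_left hMij
  have hratio : x j / x i = 1 := by
    by_contra hne
    linarith [Real.log_lt_sub_one_of_pos (div_pos (hx j) (hx i)) hne]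
  exact ((div_eq_one_iff_eq (hx i).ne').mp hratio).symm

theorem reactionDissipation_nonneg (hM : ∀ i j, i ≠ j → 0 ≤ M i j)
    (hC : C * Cᵀ = Cᵀ * C) (hspec : ∀ μ ∈ spectrum ℂ (C.map (algebraMap ℝ ℂ)), 0 ≤ μ.re)
    (hx : ∀ i, 0 < x i) : 0 ≤ reactionDissipation M C x :=
  add_nonneg (entropyProduction_nonneg hM hx) (dotProduct_mulVec_nonneg_of_normal hC hspec _)

theorem eq_one_of_reactionDissipation_eq_zero (hirr : MatrixIrreducible M)
    (hM : ∀ i j, i ≠ j → 0 ≤ M i j) (hC : C * Cᵀ = Cᵀ * C)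
    (hspec : ∀ μ ∈ spectrum ℂ (C.map (algebraMap ℝ ℂ)), 0 ≤ μ.re) (hCrow : ∀ i, ∑ j, C i j = 1)
    (hx : ∀ i, 0 < x i) (h : reactionDissipation M C x = 0) : x = 1 := by
  have hE := entropyProduction_nonneg hM hx
  have hQ := dotProduct_mulVec_nonneg_of_normal hC hspec (x - 1)
  rw [reactionDissipation] at h
  have hconst := hirr.apply_eq_of_entropyProduction_eq_zero hM hx (by linarith)
  -- a constant vector is fixed by the row-stochastic `C`, so the quadratic form is `‖x - 1‖²`
  have hfix : C *ᵥ (x - 1) = x - 1 := by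
    ext i
    simp [mulVec, dotProduct, hconst _ i, ← Finset.sum_mul, hCrow]
  rw [hfix] at hQ h
  exact sub_eq_zero.mp (dotProduct_self_eq_zero.mp (by linarith))

end ReactionDissipation

theorem exists_abs_deriv_le_of_abs_deriv_deriv_le {f : ℝ → ℝ} (hf : ContDiff ℝ 2 f) {B a K : ℝ}
    (hB : ∀ x, |f x| ≤ B) (ha : 0 ≤ a) (hf'' : ∀ x, |deriv (deriv f) x| ≤ a * |deriv f x| + K) :
    ∃ V, ∀ x, |deriv f x| ≤ V := by
  have hf1 : Differentiable ℝ f := hf.differentiable two_ne_zero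
  have hf2 : Differentiable ℝ (deriv f) := hf.differentiable_deriv_two
  -- on a window of length `h` with `h * a ≤ 1/2`, the variation of `f'` is at most half its
  -- maximum there plus `h * K`, while the mean value theorem gives a point where `|f'| ≤ 2B/h`
  set h := 1 / (2 * a + 1) with h_def
  have hh : 0 < h := by positivity
  have hha : h * a ≤ 1 / 2 := by
    rw [h_def, div_mul_eq_mul_div, one_mul, div_le_div_iff₀ (by positivity) two_pos]
    linarith
  refine ⟨2 * (2 * B / h + h * K), fun x => ?_⟩
  obtain ⟨y, hy, hymax⟩ := isCompact_Icc.exists_isMaxOn (Set.nonempty_Icc.mpr (by linarith))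
    (continuous_abs.comp hf2.continuous).continuousOn (s := Set.Icc x (x + h))
  obtain ⟨ζ, hζ, hslope⟩ := exists_deriv_eq_slope f (by linarith : x < x + h)
    hf1.continuous.continuousOn hf1.differentiableOn
  have hζ' : |deriv f ζ| ≤ 2 * B / h := by
    rw [hslope, add_sub_cancel_left, abs_div, abs_of_pos hh]
    gcongr
    linarith [abs_sub (f (x + h)) (f x), hB (x + h), hB x]
  have hbound : ∀ t ∈ Set.Icc x (x + h), ‖deriv (deriv f) t‖ ≤ a * |deriv f y| + K :=
    fun t ht => (hf'' t).trans (by have : |deriv f t| ≤ |deriv f y| := hymax ht; gcongr)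
  have hdiff := Convex.norm_image_sub_le_of_norm_deriv_le (fun t _ => hf2 t) hbound
    (convex_Icc x (x + h)) (Set.Ioo_subset_Icc_self hζ) hy
  have hyζ : ‖y - ζ‖ ≤ h := by
    rw [Real.norm_eq_abs, abs_le]
    constructor <;> linarith [hy.1, hy.2, hζ.1, hζ.2]
  have hrate : 0 ≤ a * |deriv f y| + K := (norm_nonneg _).trans (hbound y hy)
  have hW : |deriv f y| ≤ 2 * B / h + h * (a * |deriv f y| + K) := by
    rw [Real.norm_eq_abs] at hdiff
    nlinarith [abs_sub_abs_le_abs_sub (deriv f y) (deriv f ζ)]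
  have hx : |deriv f x| ≤ |deriv f y| := hymax (Set.left_mem_Icc.mpr (by linarith))
  nlinarith [mul_le_mul_of_nonneg_right hha (abs_nonneg (deriv f y))]

theorem exists_abs_deriv_le_of_linear_ode {f : ℝ → ℝ} (hf : ContDiff ℝ 2 f) {B δ c R : ℝ}
    (hB : ∀ x, |f x| ≤ B) (hδ : 0 < δ)
    (hR : ∀ x, |-δ * deriv (deriv f) x - c * deriv f x| ≤ R) :
    ∃ V, ∀ x, |deriv f x| ≤ V := by
  refine exists_abs_deriv_le_of_abs_deriv_deriv_le hf hB (by positivity : 0 ≤ |c| / δ)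
    (K := R / δ) fun x => ?_
  rw [div_mul_eq_mul_div, ← add_div, le_div_iff₀ hδ]
  have h := abs_add_le (-δ * deriv (deriv f) x - c * deriv f x) (c * deriv f x)
  rw [sub_add_cancel, abs_mul, abs_mul, abs_neg, abs_of_pos hδ] at h
  linarith [hR x]

theorem frequently_atTop_lt_of_hasDerivAt_neg {f φ : ℝ → ℝ} (hf : ∀ x, HasDerivAt f (-φ x) x)
    (hbdd : BddBelow (Set.range f)) {ε : ℝ} (hε : 0 < ε) : ∃ᶠ x in atTop, φ x < ε := by
  rw [frequently_atTop]
  intro T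
  by_contra! hφ
  obtain ⟨b, hb⟩ := hbdd
  have hdecay : ∀ x ≥ T, f x - f T ≤ -ε * (x - T) := fun x hx =>
    Convex.image_sub_le_mul_sub_of_deriv_le (convex_Ici T)
      (fun y _ => (hf y).continuousAt.continuousWithinAt)
      (fun y _ => (hf y).differentiableAt.differentiableWithinAt)
      (fun y hy => by
        rw [(hf y).deriv]
        linarith [hφ y (interior_subset hy)])
      T Set.self_mem_Ici x hx hx
  set x := T + (f T - b) / ε + 1
  have hx : f x - f T ≤ -ε * (x - T) := hdecay x (by
    have : b ≤ f T := hb ⟨T, rfl⟩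
    have : 0 ≤ (f T - b) / ε := div_nonneg (by linarith) hε.le
    linarith)
  have hbx : b ≤ f x := hb ⟨x, rfl⟩
  have : ε * (x - T) = f T - b + ε := by
    simp only [x]
    field_simp
    ring
  linarith

theorem frequently_atBot_lt_of_hasDerivAt_neg {f φ : ℝ → ℝ} (hf : ∀ x, HasDerivAt f (-φ x) x)
    (hbdd : BddAbove (Set.range f)) {ε : ℝ} (hε : 0 < ε) : ∃ᶠ x in atBot, φ x < ε := by
  have hreflect (x : ℝ) : HasDerivAt (fun y => -f (-y)) (-φ (-x)) x :=
    ((hf (-x)).comp x (hasDerivAt_neg x)).neg.congr_deriv (by ring)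
  have hbdd' : BddBelow (Set.range fun y => -f (-y)) := by
    obtain ⟨b, hb⟩ := hbdd
    exact ⟨-b, by rintro _ ⟨y, rfl⟩; linarith [hb ⟨-y, rfl⟩]⟩
  exact tendsto_neg_atTop_atBot.frequently
    (frequently_atTop_lt_of_hasDerivAt_neg hreflect hbdd' hε)

theorem eq_of_tendsto_of_frequently_lt {E ι : Type*} [TopologicalSpace E] {K : Set E}
    (hK : IsCompact K) {g φ : E → ℝ} (hg : ContinuousOn g K) (hφ : ContinuousOn φ K)
    (hφ0 : ∀ w ∈ K, 0 ≤ φ w) {L : ℝ} (hzero : ∀ w ∈ K, φ w = 0 → g w = L) {l : Filter ι}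
    {z : ι → E} (hzK : ∀ t, z t ∈ K) (hfreq : ∀ ε > 0, ∃ᶠ t in l, φ (z t) < ε) {G : ℝ}
    (hlim : Tendsto (fun t => g (z t)) l (𝓝 G)) : G = L := by
  by_contra hne
  set δ := |G - L| / 2 with hδ_def
  have hδ : 0 < δ := by have := sub_ne_zero.mpr hne; positivity
  -- `ψ` agrees with `φ` away from the level `L` of `g`, and is positive on all of `K`
  set ψ := fun w => φ w + max 0 (δ - |g w - L|)
  have hψ : ∀ᶠ t in l, ψ (z t) = φ (z t) := by
    filter_upwards [Metric.tendsto_nhds.mp hlim δ hδ] with t ht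
    rw [Real.dist_eq] at ht
    have : δ ≤ |g (z t) - L| := by
      have := abs_sub_abs_le_abs_sub (G - L) (g (z t) - L)
      rw [abs_sub_comm] at ht
      simp only [sub_sub_sub_cancel_right] at this
      linarith [abs_nonneg (G - L)]
    simp [ψ, this]
  obtain ⟨t₀, -⟩ := ((hfreq 1 one_pos).and_eventually hψ).exists
  obtain ⟨w₀, hw₀, hmin⟩ := hK.exists_isMinOn ⟨z t₀, hzK t₀⟩
    (by fun_prop : ContinuousOn ψ K)
  have hψpos : 0 < ψ w₀ := by
    rcases (hφ0 w₀ hw₀).lt_or_eq with h | h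
    · exact add_pos_of_pos_of_nonneg h (le_max_left _ _)
    · simp [ψ, ← h, hzero w₀ hw₀ h.symm, hδ]
  obtain ⟨t, hlt, heq⟩ := ((hfreq _ hψpos).and_eventually hψ).exists
  have : ψ w₀ ≤ ψ (z t) := hmin (hzK t)
  linarith

theorem eq_zero_of_hasDerivAt_neg_of_isCompact {E : Type*} [TopologicalSpace E] {K : Set E}
    (hK : IsCompact K) {g φ : E → ℝ} (hg : ContinuousOn g K) (hφ : ContinuousOn φ K)
    (hφ0 : ∀ w ∈ K, 0 ≤ φ w) {L : ℝ} (hzero : ∀ w ∈ K, φ w = 0 → g w = L) {z : ℝ → E}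
    (hzK : ∀ t, z t ∈ K) (hderiv : ∀ t, HasDerivAt (fun s => g (z s)) (-φ (z t)) t) (t : ℝ) :
    φ (z t) = 0 := by
  obtain ⟨C, hC⟩ := hK.exists_bound_of_continuousOn hg
  have hbdd : ∀ s, |g (z s)| ≤ C := fun s => hC _ (hzK s)
  have hbddBelow : BddBelow (Set.range fun s => g (z s)) :=
    ⟨-C, by rintro _ ⟨s, rfl⟩; linarith [neg_abs_le (g (z s)), hbdd s]⟩
  have hbddAbove : BddAbove (Set.range fun s => g (z s)) :=
    ⟨C, by rintro _ ⟨s, rfl⟩; linarith [le_abs_self (g (z s)), hbdd s]⟩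
  have hanti : Antitone fun s => g (z s) :=
    antitone_of_hasDerivAt_nonpos hderiv fun s => neg_nonpos.mpr (hφ0 _ (hzK s))
  have htop := tendsto_atTop_ciInf hanti hbddBelow
  have hbot := tendsto_atBot_ciSup hanti hbddAbove
  have hinf := eq_of_tendsto_of_frequently_lt hK hg hφ hφ0 hzero hzK
    (fun ε hε => frequently_atTop_lt_of_hasDerivAt_neg hderiv hbddBelow hε) htop
  have hsup := eq_of_tendsto_of_frequently_lt hK hg hφ hφ0 hzero hzK
    (fun ε hε => frequently_atBot_lt_of_hasDerivAt_neg hderiv hbddAbove hε) hbot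
  have hconst : (fun s => g (z s)) = fun _ => L := funext fun s =>
    le_antisymm (hsup ▸ hanti.ge_of_tendsto hbot s) (hinf ▸ hanti.le_of_tendsto htop s)
  have := hderiv t
  rw [hconst] at this
  exact neg_eq_zero.mp (this.unique (hasDerivAt_const t L))

theorem hasDerivAt_energy_term {f f' : ℝ → ℝ} {ξ f'' : ℝ} (hf : HasDerivAt f (f' ξ) ξ)
    (hf' : HasDerivAt f' f'' ξ) (hξ : f ξ ≠ 0) (δ c : ℝ) :
    HasDerivAt (fun θ => -δ * ((1 - (f θ)⁻¹) * f' θ) - c * (f θ - Real.log (f θ)))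
      (-(δ * f' ξ ^ 2 / f ξ ^ 2) + (1 - (f ξ)⁻¹) * (-δ * f'' - c * f' ξ)) ξ := by
  have h := ((((hasDerivAt_const ξ 1).sub (hf.inv hξ)).mul hf').const_mul (-δ)).sub
    ((hf.sub (hf.log hξ)).const_mul c)
  refine h.congr_deriv ?_
  simp only [Pi.sub_apply, Pi.inv_apply]
  field_simp
  ring

section TravelingWave

variable {N : ℕ}

noncomputable def phasePoint (p : ℝ → Fin N → ℝ) (ξ : ℝ) : (Fin N → ℝ) × (Fin N → ℝ) :=
  (p ξ, fun i => deriv (fun x => p x i) ξ)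

noncomputable def energy (d : Fin N → ℝ) (c : ℝ) (w : (Fin N → ℝ) × (Fin N → ℝ)) : ℝ :=
  ∑ i, (-(d i) * ((1 - (w.1 i)⁻¹) * w.2 i) - c * (w.1 i - Real.log (w.1 i)))

noncomputable def dissipation (M C : Matrix (Fin N) (Fin N) ℝ) (d : Fin N → ℝ)
    (w : (Fin N → ℝ) × (Fin N → ℝ)) : ℝ :=
  ∑ i, d i * w.2 i ^ 2 / w.1 i ^ 2 + reactionDissipation M C w.1

variable {M C : Matrix (Fin N) (Fin N) ℝ} {d : Fin N → ℝ} {c : ℝ}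

theorem hasDerivAt_energy_phasePoint (hMrow : ∀ i, ∑ j, M i j = 0)
    (hMcol : ∀ j, ∑ i, M i j = 0) (hCrow : ∀ i, ∑ j, C i j = 1) {p : ℝ → Fin N → ℝ}
    (hp : ∀ i, ContDiff ℝ 2 fun ξ => p ξ i) (hp0 : ∀ ξ i, p ξ i ≠ 0)
    (heq : ∀ ξ i, -(d i) * deriv (deriv fun x => p x i) ξ - c * deriv (fun x => p x i) ξ
      = (M *ᵥ p ξ) i + p ξ i - p ξ i * (C *ᵥ p ξ) i) (ξ : ℝ) :
    HasDerivAt (fun s => energy d c (phasePoint p s)) (-dissipation M C d (phasePoint p ξ)) ξ := by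
  have hterm (i : Fin N) := hasDerivAt_energy_term
    ((hp i).differentiable two_ne_zero ξ).hasDerivAt
    ((hp i).differentiable_deriv_two ξ).hasDerivAt (hp0 ξ i) (d i) c
  refine (HasDerivAt.fun_sum fun i _ => hterm i).congr_deriv ?_
  simp only [heq, Finset.sum_add_distrib, dissipation, phasePoint, Finset.sum_neg_distrib,
    sum_one_sub_inv_mul_reaction hMrow hMcol hCrow (hp0 ξ), neg_add]

theorem continuousOn_energy {S : Set ((Fin N → ℝ) × (Fin N → ℝ))}
    (hS : ∀ w ∈ S, ∀ i, w.1 i ≠ 0) : ContinuousOn (energy d c) S :=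
  continuousOn_finsetSum _ fun i _ => by
    have hi : ∀ w ∈ S, w.1 i ≠ 0 := fun w hw => hS w hw i
    fun_prop (disch := assumption)

theorem continuousOn_dissipation {S : Set ((Fin N → ℝ) × (Fin N → ℝ))}
    (hS : ∀ w ∈ S, ∀ i, w.1 i ≠ 0) : ContinuousOn (dissipation M C d) S := by
  refine (continuousOn_finsetSum _ fun i _ => ?_).add
    ((continuousOn_finsetSum _ fun i _ => continuousOn_finsetSum _ fun j _ => ?_).add ?_)
  · have hi : ∀ w ∈ S, w.1 i ^ 2 ≠ 0 := fun w hw => pow_ne_zero 2 (hS w hw i)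
    fun_prop (disch := assumption)
  · have hi : ∀ w ∈ S, w.1 i ≠ 0 := fun w hw => hS w hw i
    have hji : ∀ w ∈ S, w.1 j / w.1 i ≠ 0 := fun w hw => div_ne_zero (hS w hw j) (hS w hw i)
    fun_prop (disch := assumption)
  · exact (Continuous.dotProduct (by fun_prop)
      (continuous_const.matrix_mulVec (by fun_prop))).continuousOn

theorem dissipation_nonneg (hd : ∀ i, 0 ≤ d i) (hM : ∀ i j, i ≠ j → 0 ≤ M i j)
    (hC : C * Cᵀ = Cᵀ * C) (hspec : ∀ μ ∈ spectrum ℂ (C.map (algebraMap ℝ ℂ)), 0 ≤ μ.re)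
    {w : (Fin N → ℝ) × (Fin N → ℝ)} (hw : ∀ i, 0 < w.1 i) : 0 ≤ dissipation M C d w :=
  add_nonneg (Finset.sum_nonneg fun i _ => by have := hd i; positivity)
    (reactionDissipation_nonneg hM hC hspec hw)

theorem eq_of_dissipation_eq_zero (hd : ∀ i, 0 < d i) (hirr : MatrixIrreducible M)
    (hM : ∀ i j, i ≠ j → 0 ≤ M i j) (hC : C * Cᵀ = Cᵀ * C)
    (hspec : ∀ μ ∈ spectrum ℂ (C.map (algebraMap ℝ ℂ)), 0 ≤ μ.re) (hCrow : ∀ i, ∑ j, C i j = 1)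
    {w : (Fin N → ℝ) × (Fin N → ℝ)} (hw : ∀ i, 0 < w.1 i) (h : dissipation M C d w = 0) :
    w = (1, 0) := by
  have hterm : ∀ i ∈ Finset.univ, 0 ≤ d i * w.2 i ^ 2 / w.1 i ^ 2 := fun i _ => by
    have := hd i; positivity
  have hR := reactionDissipation_nonneg hM hC hspec hw
  have hsum := Finset.sum_nonneg hterm
  rw [dissipation] at h
  refine Prod.ext (eq_one_of_reactionDissipation_eq_zero hirr hM hC hspec hCrow hw
    (by linarith)) (funext fun i => ?_)
  have := (Finset.sum_eq_zero_iff_of_nonneg hterm).mp (by linarith) i (Finset.mem_univ i)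
  simpa [(hd i).ne', (hw i).ne'] using this

end TravelingWave

theorem stmt0_general {N : ℕ}
    (M C : Matrix (Fin N) (Fin N) ℝ) (d : Fin N → ℝ) (hd : ∀ i, 0 < d i)
    -- (A1)
    (hM_offdiag : ∀ i j, i ≠ j → 0 ≤ M i j)
    (hM_irr : MatrixIrreducible M)
    (hM_lss : ∀ i, ∑ j, M i j = ∑ j, M j i)
    (hM_row : ∀ i, ∑ j, M i j = 0)
    -- (A2)
    (hC_normal : C * Cᵀ = Cᵀ * C)
    (hC_row : ∀ i, ∑ j, C i j = 1)
    -- (A3)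
    (hC_spec : ∀ μ ∈ spectrum ℂ (C.map (algebraMap ℝ ℂ)), 0 ≤ μ.re)
    (c : ℝ) (p : ℝ → Fin N → ℝ)
    (hp_C2 : ∀ i, ContDiff ℝ 2 (fun ξ => p ξ i))
    (hp_bdd : ∃ B : ℝ, ∀ ξ i, |p ξ i| ≤ B)
    (hp_inf : ∃ m > 0, ∀ ξ i, m ≤ p ξ i)
    (hp_eq : ∀ ξ i,
      -(d i) * deriv (deriv (fun x => p x i)) ξ - c * deriv (fun x => p x i) ξ
        = M.mulVec (p ξ) i + p ξ i - p ξ i * C.mulVec (p ξ) i) :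
    ∀ ξ i, p ξ i = 1 := by
  obtain ⟨B, hB⟩ := hp_bdd
  obtain ⟨m, hm, hmp⟩ := hp_inf
  have hpos : ∀ ξ i, 0 < p ξ i := fun ξ i => hm.trans_le (hmp ξ i)
  have hM_col : ∀ j, ∑ i, M i j = 0 := fun j => (hM_lss j).symm.trans (hM_row j)
  set X := Set.univ.pi fun _ : Fin N => Set.Icc m B
  have hX : IsCompact X := isCompact_univ_pi fun _ => isCompact_Icc
  have hpX : ∀ ξ, p ξ ∈ X := fun ξ =>
    Set.mem_univ_pi.mpr fun i => ⟨hmp ξ i, (le_abs_self _).trans (hB ξ i)⟩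
  obtain ⟨R, hR⟩ := hX.exists_bound_of_continuousOn
    (f := fun x => M *ᵥ x + x - x * (C *ᵥ x)) (by fun_prop : Continuous _).continuousOn
  choose V hV using fun i => exists_abs_deriv_le_of_linear_ode (hp_C2 i) (fun ξ => hB ξ i) (hd i)
    fun ξ => by rw [hp_eq ξ i]; exact (norm_le_pi_norm _ i).trans (hR _ (hpX ξ))
  set K := X ×ˢ Set.univ.pi fun i => Set.Icc (-V i) (V i)
  have hKc : IsCompact K := hX.prod (isCompact_univ_pi fun _ => isCompact_Icc)
  have hK : ∀ w ∈ K, ∀ i, 0 < w.1 i := fun w hw i => hm.trans_le (Set.mem_univ_pi.mp hw.1 i).1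
  have hzK : ∀ ξ, phasePoint p ξ ∈ K := fun ξ =>
    ⟨hpX ξ, Set.mem_univ_pi.mpr fun i => abs_le.mp (hV i ξ)⟩
  have hrest (w : (Fin N → ℝ) × (Fin N → ℝ)) :=
    eq_of_dissipation_eq_zero (w := w) hd hM_irr hM_offdiag hC_normal hC_spec hC_row
  have hdiss := eq_zero_of_hasDerivAt_neg_of_isCompact hKc
    (continuousOn_energy fun w hw i => (hK w hw i).ne')
    (continuousOn_dissipation fun w hw i => (hK w hw i).ne')
    (fun w hw => dissipation_nonneg (fun i => (hd i).le) hM_offdiag hC_normal hC_spec (hK w hw))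
    (fun w hw h => congrArg (energy d c) (hrest w (hK w hw) h)) hzK
    (hasDerivAt_energy_phasePoint hM_row hM_col hC_row hp_C2 (fun ξ i => (hpos ξ i).ne') hp_eq)
  exact fun ξ i => congrFun (congrArg Prod.fst (hrest _ (hpos ξ) (hdiss ξ))) i

theorem stmt0 {N : ℕ} (hN : 2 ≤ N)
    (M C : Matrix (Fin N) (Fin N) ℝ) (d : Fin N → ℝ) (hd : ∀ i, 0 < d i)
    -- (A1)
    (hM_offdiag : ∀ i j, i ≠ j → 0 ≤ M i j)
    (hM_irr : MatrixIrreducible M)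
    (hM_lss : ∀ i, ∑ j, M i j = ∑ j, M j i)
    (hM_row : ∀ i, ∑ j, M i j = 0)
    -- (A2)
    (hC_pos : ∀ i j, 0 < C i j)
    (hC_normal : C * Cᵀ = Cᵀ * C)
    (hC_row : ∀ i, ∑ j, C i j = 1)
    -- (A3)
    (hC_spec : ∀ μ ∈ spectrum ℂ (C.map (algebraMap ℝ ℂ)), 0 ≤ μ.re)
    (c : ℝ) (p : ℝ → Fin N → ℝ)
    (hp_C2 : ∀ i, ContDiff ℝ 2 (fun ξ => p ξ i))
    (hp_bdd : ∃ B : ℝ, ∀ ξ i, |p ξ i| ≤ B)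
    (hp_inf : ∃ m > 0, ∀ ξ i, m ≤ p ξ i)
    (hp_eq : ∀ ξ i,
      -(d i) * deriv (deriv (fun x => p x i)) ξ - c * deriv (fun x => p x i) ξ
        = M.mulVec (p ξ) i + p ξ i - p ξ i * C.mulVec (p ξ) i) :
    ∀ ξ i, p ξ i = 1 :=
  stmt0_general M C d hd hM_offdiag hM_irr hM_lss hM_row hC_normal hC_row hC_spec c p hp_C2 hp_bdd
    hp_inf hp_eq
end

section
/- Assume (A1). Then for every vector p ∈ (0,+∞)^N one has Σ_{i=1}^N (M p)_i / p_i ≥ 0, with equality if and only if p is a scalar multiple of 𝟙. -/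
open Matrix

theorem stmt4 {N : ℕ} (hN : 2 ≤ N)
    (M : Matrix (Fin N) (Fin N) ℝ)
    -- (A1)
    (hM_offdiag : ∀ i j, i ≠ j → 0 ≤ M i j)
    (hM_irr : MatrixIrreducible M)
    (hM_lss : ∀ i, ∑ j, M i j = ∑ j, M j i)
    (hM_row : ∀ i, ∑ j, M i j = 0)
    (p : Fin N → ℝ) (hp : ∀ i, 0 < p i) :
    0 ≤ ∑ i, M.mulVec p i / p i ∧
      (∑ i, M.mulVec p i / p i = 0 ↔ ∃ t : ℝ, ∀ i, p i = t) := by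
  have hp0 : ∀ i, p i ≠ 0 := fun i => (hp i).ne'
  have hcol : ∀ j, ∑ i, M i j = 0 := fun j => by rw [← hM_lss j]; exact hM_row j
  set g : Fin N → Fin N → ℝ :=
    fun i j => M i j * ((p j / p i - 1) - Real.log (p j / p i)) with hg
  have key : ∑ i, ∑ j, g i j = ∑ i, M.mulVec p i / p i := by
    have h1 : ∀ i j, g i j =
        M i j * p j / p i - M i j - (M i j * Real.log (p j) - M i j * Real.log (p i)) := by
      intro i j
      simp only [hg, Real.log_div (hp0 j) (hp0 i)]
      ring
    calc ∑ i, ∑ j, g i j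
        = ∑ i, ∑ j, (M i j * p j / p i - M i j
            - (M i j * Real.log (p j) - M i j * Real.log (p i))) := by
          simp only [h1]
      _ = (∑ i, ∑ j, M i j * p j / p i) - (∑ i, ∑ j, M i j)
            - ((∑ i, ∑ j, M i j * Real.log (p j)) - (∑ i, ∑ j, M i j * Real.log (p i))) := by
          simp [Finset.sum_sub_distrib]
      _ = ∑ i, M.mulVec p i / p i := by
          have hA : ∀ i : Fin N, ∑ j, M i j * p j / p i = M.mulVec p i / p i := by
            intro i
            rw [Matrix.mulVec, dotProduct, Finset.sum_div]
          have hB : ∑ i : Fin N, ∑ j, M i j = 0 := by simp [hM_row]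
          have hC : ∑ i : Fin N, ∑ j, M i j * Real.log (p j) = 0 := by
            rw [Finset.sum_comm]
            refine Finset.sum_eq_zero fun j _ => ?_
            rw [← Finset.sum_mul, hcol j, zero_mul]
          have hD : ∑ i : Fin N, ∑ j, M i j * Real.log (p i) = 0 := by
            refine Finset.sum_eq_zero fun i _ => ?_
            rw [← Finset.sum_mul, hM_row i, zero_mul]
          rw [hB, hC, hD]
          simp [hA]
  have hgnn : ∀ i j, 0 ≤ g i j := by
    intro i j
    rcases eq_or_ne i j with rfl | hij
    · simp [hg, div_self (hp0 i)]
    · have hx : 0 < p j / p i := div_pos (hp j) (hp i)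
      have hlog := Real.log_le_sub_one_of_pos hx
      exact mul_nonneg (hM_offdiag i j hij) (by linarith)
  have hsumnn : 0 ≤ ∑ i, ∑ j, g i j :=
    Finset.sum_nonneg fun i _ => Finset.sum_nonneg fun j _ => hgnn i j
  constructor
  · rw [← key]; exact hsumnn
  constructor
  · intro hzero
    have hsz : ∑ i, ∑ j, g i j = 0 := key.trans hzero
    have hgz : ∀ i j, g i j = 0 := by
      intro i j
      have h1 := (Finset.sum_eq_zero_iff_of_nonneg
        (fun i _ => Finset.sum_nonneg fun j _ => hgnn i j)).mp hsz i (Finset.mem_univ i)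
      exact (Finset.sum_eq_zero_iff_of_nonneg (fun j _ => hgnn i j)).mp h1 j (Finset.mem_univ j)
    have hi0 : 0 < N := by omega
    set i0 : Fin N := ⟨0, hi0⟩
    refine ⟨p i0, ?_⟩
    by_contra hc
    push_neg at hc
    obtain ⟨k, hk⟩ := hc
    set S : Finset (Fin N) := Finset.univ.filter (fun i => p i = p i0) with hS
    have hSne : S.Nonempty := ⟨i0, by simp [hS]⟩
    have hSneq : S ≠ Finset.univ := by
      intro h
      have : k ∈ S := h ▸ Finset.mem_univ k
      rw [hS, Finset.mem_filter] at this
      exact hk this.2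
    obtain ⟨i, hiS, j, hjS, hMij⟩ := hM_irr S hSne hSneq
    have hpi : p i = p i0 := by
      rw [hS, Finset.mem_filter] at hiS; exact hiS.2
    have hpj : p j ≠ p i0 := by
      intro h; exact hjS (by rw [hS, Finset.mem_filter]; exact ⟨Finset.mem_univ j, h⟩)
    have hij : i ≠ j := fun h => hpj (h ▸ hpi)
    have hMpos : 0 < M i j := lt_of_le_of_ne (hM_offdiag i j hij) (Ne.symm hMij)
    have hx : 0 < p j / p i := div_pos (hp j) (hp i)
    have hxne : p j / p i ≠ 1 := by
      intro h
      have : p j = p i := (div_eq_one_iff_eq (hp0 i)).mp h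
      exact hpj (this.trans hpi)
    have hlt := Real.log_lt_sub_one_of_pos hx hxne
    have := hgz i j
    rw [hg] at this
    nlinarith
  · rintro ⟨t, ht⟩
    have hmv : ∀ i, M.mulVec p i = 0 := by
      intro i
      rw [Matrix.mulVec, dotProduct]
      calc ∑ j, M i j * p j = ∑ j, M i j * t := by simp [ht]
        _ = (∑ j, M i j) * t := by rw [Finset.sum_mul]
        _ = 0 := by rw [hM_row i, zero_mul]
    simp [hmv]
end

section
/- Let M be an N×N real matrix with nonnegative off-diagonal entries which is irreducible, and let C be any N×N real matrix. If u ∈ ℝ^N is nonnegative, not equal to the zero vector, and satisfies M u + u = u ∘ (C u), then every component of u is strictly positive. -/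
open Matrix

theorem stmt7 {N : ℕ} (hN : 2 ≤ N)
    (M C : Matrix (Fin N) (Fin N) ℝ)
    (hM_offdiag : ∀ i j, i ≠ j → 0 ≤ M i j)
    (hM_irr : MatrixIrreducible M)
    (u : Fin N → ℝ) (hu_nonneg : ∀ i, 0 ≤ u i) (hu_ne : u ≠ 0)
    (hu_eq : ∀ i, M.mulVec u i + u i = u i * C.mulVec u i) :
    ∀ i, 0 < u i := by
  by_contra h
  push_neg at h
  obtain ⟨i0, hi0⟩ := h
  have hi0' : u i0 = 0 := le_antisymm hi0 (hu_nonneg i0)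
  set S : Finset (Fin N) := Finset.univ.filter (fun i => u i = 0) with hS
  have hSne : S.Nonempty := ⟨i0, by simp [hS, hi0']⟩
  have hSnu : S ≠ Finset.univ := by
    intro hcontra
    apply hu_ne
    funext k
    have : k ∈ S := hcontra ▸ Finset.mem_univ k
    simpa [hS] using this
  obtain ⟨i, hiS, j, hjS, hMij⟩ := hM_irr S hSne hSnu
  have hui : u i = 0 := by simpa [hS] using hiS
  have huj : 0 < u j := by
    have : u j ≠ 0 := by simpa [hS] using hjS
    exact lt_of_le_of_ne (hu_nonneg j) (Ne.symm this)
  have heq := hu_eq i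
  rw [hui] at heq
  simp at heq
  -- heq : M.mulVec u i = 0
  have hsum : ∑ k, M i k * u k = 0 := by simpa [Matrix.mulVec, dotProduct] using heq
  have hterm : ∀ k ∈ Finset.univ, 0 ≤ M i k * u k := by
    intro k _
    by_cases hk : k = i
    · subst hk; simp [hui]
    · exact mul_nonneg (hM_offdiag i k (Ne.symm hk)) (hu_nonneg k)
  have hzero : M i j * u j = 0 :=
    (Finset.sum_eq_zero_iff_of_nonneg hterm).mp hsum j (Finset.mem_univ j)
  exact hMij (by
    rcases mul_eq_zero.mp hzero with h | h
    · exact h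
    · exact absurd h huj.ne')
end
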